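/- Let G and G' be vertex-colored graphs with identical multisets of vertex colors. There exists an injective color filter f such that the 0-dimensional persistence diagrams of the induced vertex-color filtrations of G and G' differ if and only if there exists a color-separating set for G and G'. -/

import Mathlib

open scoped Classical

noncomputable section

namespace PH

variable {V X : Type*}

/-- Number of connected components of a graph. -/
def numComponents (G : SimpleGraph V) : ℕ := Nat.card G.ConnectedComponent

/-- Sublevel set of a vertex filter function: `{v | φ v < t}` if `strict`, else `{v | φ v ≤ t}`. -/
def sub (φ : V → ℝ) (strict : Bool) (t : ℝ) : Set V :=
  {v | if strict then φ v < t else φ v ≤ t}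

/-- 0-dimensional persistent Betti number of the vertex filtration of `G` induced by `φ`:
the number of connected components of the sublevel graph at level `j` (strict if `sj`)
containing at least one vertex of the sublevel set at level `i` (strict if `si`),
i.e. the rank of the map `H₀(G_i) → H₀(G_j)`. -/
def vBetti (G : SimpleGraph V) (φ : V → ℝ) (si : Bool) (i : ℝ) (sj : Bool) (j : ℝ) : ℕ :=
  Nat.card {K : (G.induce (sub φ sj j)).ConnectedComponent //
    ∃ v : sub φ sj j, (v : V) ∈ sub φ si i ∧
      (G.induce (sub φ sj j)).connectedComponentMk v = K}

/-- `β^{i,∞}`: components of the whole graph `G` containing a vertex of sublevel `i`. -/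
def vBettiInf (G : SimpleGraph V) (φ : V → ℝ) (si : Bool) (i : ℝ) : ℕ :=
  Nat.card {K : G.ConnectedComponent // ∃ v, v ∈ sub φ si i ∧ G.connectedComponentMk v = K}

/-- The 0-dimensional persistence diagram of the vertex filtration of `G` induced by the
vertex filter `φ`, represented by its multiplicity function on pairs
(birth, death) ∈ ℝ × (ℝ ∪ {∞}).  Real holes `(b, ⊤)` are components of `G` with minimal
filter value `b`; trivial holes `(b, b)` are vertices of value `b` not giving birth to a
new component; almost holes `(b, d)` with `b < d < ∞` get the multiplicity prescribed by
the Fundamental Lemma of Persistent Homology. -/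
def vDiagram (G : SimpleGraph V) (φ : V → ℝ) : ℝ × WithTop ℝ → ℕ :=
  fun p =>
    p.2.recTopCoe (vBettiInf G φ false p.1 - vBettiInf G φ true p.1)
      (fun d =>
        if p.1 = d then
          Nat.card {v : V // φ v = d} -
            (vBetti G φ false d false d - vBetti G φ true d false d)
        else if p.1 < d then
          ((vBetti G φ false p.1 true d : ℤ) - (vBetti G φ false p.1 false d : ℤ)
            - (vBetti G φ true p.1 true d : ℤ) + (vBetti G φ true p.1 false d : ℤ)).toNat
        else 0)

/-- The subgraph of `G` on all vertices, with the edges whose filter value is `< t`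
(if `strict`) or `≤ t` (otherwise): one step of the edge filtration induced by `ψ`. -/
def eSub (G : SimpleGraph V) (ψ : Sym2 V → ℝ) (strict : Bool) (t : ℝ) : SimpleGraph V where
  Adj u v := G.Adj u v ∧ (if strict then ψ s(u, v) < t else ψ s(u, v) ≤ t)
  symm := ⟨fun u v h => ⟨h.1.symm, by rw [Sym2.eq_swap]; exact h.2⟩⟩
  loopless := ⟨fun v h => G.irrefl h.1⟩

/-- The 0-dimensional persistence diagram of the edge filtration of `G` induced by the
edge filter `ψ` (starting from the edgeless graph on `V` at time `0`), as a multiplicity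
function: all births are `0`; the multiplicity of `(0, d)` is the number of components
dying at value `d`, and `(0, ⊤)` has multiplicity `β⁰(G)`. -/
def eDiagram (G : SimpleGraph V) (ψ : Sym2 V → ℝ) : ℝ × WithTop ℝ → ℕ :=
  fun p =>
    if p.1 = 0 then
      p.2.recTopCoe (numComponents G)
        (fun d => numComponents (eSub G ψ true d) - numComponents (eSub G ψ false d))
    else 0

/-- Component-wise colors of a vertex-colored graph, as the multiplicity function of the
multiset, over connected components, of the set of colors occurring in the component. -/
def componentColors (G : SimpleGraph V) (c : V → X) : Set X → ℕ :=
  fun s => Nat.card {K : G.ConnectedComponent //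
    {x | ∃ v, G.connectedComponentMk v = K ∧ c v = x} = s}

/-- `Q` is a color-separating set for `(G, c)` and `(G', c')`: deleting all vertices
whose color lies in `Q` yields graphs with distinct component-wise colors. -/
def ColorSeparating {V' : Type*} (G : SimpleGraph V) (G' : SimpleGraph V')
    (c : V → X) (c' : V' → X) (Q : Set X) : Prop :=
  componentColors (G.induce {v | c v ∉ Q}) (fun v => c v.1) ≠
    componentColors (G'.induce {v | c' v ∉ Q}) (fun v => c' v.1)

/-- `S` is a separating set of `G`: removing `S` disconnects some connected component,
i.e. two vertices outside `S` are connected in `G` but not in `G - S`. -/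
def IsSeparating (G : SimpleGraph V) (S : Set V) : Prop :=
  ∃ (u v : V) (hu : u ∈ (Sᶜ : Set V)) (hv : v ∈ (Sᶜ : Set V)),
    G.Reachable u v ∧ ¬ (G.induce (Sᶜ : Set V)).Reachable ⟨u, hu⟩ ⟨v, hv⟩

/-- Total number of almost holes (pairs `(b, d)` with `b < d < ∞`) in the 0-dim
persistence diagram of the vertex filtration induced by `φ`. -/
def almostHoleCount [Fintype V] (G : SimpleGraph V) (φ : V → ℝ) : ℕ :=
  ∑ b ∈ Finset.image φ Finset.univ, ∑ d ∈ Finset.image φ Finset.univ,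
    if b < d then vDiagram G φ (b, (d : WithTop ℝ)) else 0

/-- Number of pairs with birth time `b` in the 0-dim persistence diagram of the vertex
filtration induced by `φ`. -/
def birthCount [Fintype V] (G : SimpleGraph V) (φ : V → ℝ) (b : ℝ) : ℕ :=
  vDiagram G φ (b, ⊤) + ∑ d ∈ Finset.image φ Finset.univ, vDiagram G φ (b, (d : WithTop ℝ))

/-- `γ(w)`: the minimal edge-filter value over the edges incident to `w`. -/
def gammaVal (G : SimpleGraph V) (ψ : Sym2 V → ℝ) (w : V) : ℝ :=
  sInf {r | ∃ v, G.Adj w v ∧ ψ s(w, v) = r}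

/-- `v` is preferred over `w` as the surviving representative of a merged component in
the RePHINE elder rule: smaller vertex filter value, ties broken by smaller `γ`, then by
an (arbitrary) linear order on the vertices. -/
def better (G : SimpleGraph V) (ψ : Sym2 V → ℝ) (φ : V → ℝ) [LinearOrder V]
    (v w : V) : Prop :=
  φ v < φ w ∨ (φ v = φ w ∧ (gammaVal G ψ v < gammaVal G ψ w ∨
    (gammaVal G ψ v = gammaVal G ψ w ∧ v < w)))

/-- The death time of the vertex `w` in the RePHINE edge filtration: the first filtration
value at which the connected component of `w` contains a preferred vertex (`⊤` if `w`
survives as the representative of a component of `G`). -/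
def deathTime (G : SimpleGraph V) (ψ : Sym2 V → ℝ) (φ : V → ℝ) [LinearOrder V]
    (w : V) : WithTop ℝ :=
  if h : ∃ t : ℝ, ∃ v, better G ψ φ v w ∧ (eSub G ψ false t).Reachable v w then
    ((sInf {t : ℝ | ∃ v, better G ψ φ v w ∧ (eSub G ψ false t).Reachable v w} : ℝ)
      : WithTop ℝ)
  else ⊤

/-- Number of independent cycles (missing holes) created at edge-filtration value `d`:
edges of value `d` that do not kill a connected component. -/
def missingCount (G : SimpleGraph V) (ψ : Sym2 V → ℝ) (d : ℝ) : ℕ :=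
  Nat.card {e : G.edgeSet // ψ (e : Sym2 V) = d} -
    (numComponents (eSub G ψ true d) - numComponents (eSub G ψ false d))

/-- The RePHINE diagram of a graph `G` with vertex filter `φ` and edge filter `ψ`, as a
multiplicity function on tuples `(b, d, α, γ)`: for `b = 0` each vertex `w` contributes
`(0, death w, φ w, γ w)`; for `b = 1` each independent cycle created at value `d`
contributes a missing hole `(1, d, 0, 0)`. -/
def rephineAux (G : SimpleGraph V) [LinearOrder V] (φ : V → ℝ) (ψ : Sym2 V → ℝ) :
    ℝ × WithTop ℝ × ℝ × ℝ → ℕ :=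
  fun p =>
    if p.1 = 0 then
      Nat.card {w : V // deathTime G ψ φ w = p.2.1 ∧ φ w = p.2.2.1 ∧
        gammaVal G ψ w = p.2.2.2}
    else if p.1 = 1 ∧ p.2.2.1 = 0 ∧ p.2.2.2 = 0 then
      p.2.1.recTopCoe 0 (fun d => missingCount G ψ d)
    else 0

/-- The RePHINE diagram of a vertex-colored graph with derived edge colors
`l(u,v) = {c u, c v}`, for a vertex-color filter `fv` and an edge-color filter `fe`. -/
def rephine (G : SimpleGraph V) [LinearOrder V] (c : V → X) (fv : X → ℝ)
    (fe : Sym2 X → ℝ) : ℝ × WithTop ℝ × ℝ × ℝ → ℕ :=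
  rephineAux G (fun v => fv (c v)) (fun e => fe (Sym2.map c e))

/-- The edge filter on derived edge colors given by the max of the endpoint values. -/
def maxFe (f : X → ℝ) : Sym2 X → ℝ :=
  Sym2.lift ⟨fun x y => max (f x) (f y), fun x y => max_comm _ _⟩

end PH

section StmtAux

namespace PH

open Function

instance {V : Type*} [Finite V] (G : SimpleGraph V) : Finite G.ConnectedComponent :=
  Quot.finite _

/-! ### Generic counting lemmas -/

lemma card_fiber_sum {γ ι : Type*} [Finite γ] [Fintype ι] (κ : γ → ι) :
    Nat.card γ = ∑ i, Nat.card {g // κ g = i} := by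
  classical
  have : Fintype γ := Fintype.ofFinite γ
  simp_rw [Nat.card_eq_fintype_card]
  rw [← Fintype.card_sigma]
  exact (Fintype.card_congr (Equiv.sigmaFiberEquiv κ)).symm

lemma card_part_sum {γ ι : Type*} [Finite γ] [Fintype ι] (κ : γ → ι) (P : γ → Prop) :
    Nat.card {g // P g} = ∑ i, Nat.card {g // κ g = i ∧ P g} := by
  rw [card_fiber_sum (fun g : {g // P g} => κ g.1)]
  refine Finset.sum_congr rfl fun i _ => Nat.card_congr ?_
  exact (Equiv.subtypeSubtypeEquivSubtypeInter P (fun g => κ g = i)).trans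
    (Equiv.subtypeEquivRight fun g => ⟨fun h => ⟨h.2, h.1⟩, fun h => ⟨h.2, h.1⟩⟩)

lemma card_split {γ : Type*} [Finite γ] (P Q : γ → Prop) (h : ∀ g, Q g → P g) :
    Nat.card {g // P g} = Nat.card {g // Q g} + Nat.card {g // P g ∧ ¬ Q g} := by
  classical
  have e1 : {x : {g // P g} // Q x.1} ≃ {g // Q g} :=
    (Equiv.subtypeSubtypeEquivSubtypeInter P Q).trans
      (Equiv.subtypeEquivRight fun g => ⟨fun hh => hh.2, fun hh => ⟨h g hh, hh⟩⟩)
  have e2 : {x : {g // P g} // ¬ Q x.1} ≃ {g // P g ∧ ¬ Q g} :=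
    Equiv.subtypeSubtypeEquivSubtypeInter P (fun g => ¬ Q g)
  rw [← Nat.card_sum]
  exact Nat.card_congr ((Equiv.sumCompl fun x : {g // P g} => Q x.1).symm.trans
    (e1.sumCongr e2))

lemma card_split_total {γ : Type*} [Finite γ] (Q : γ → Prop) :
    Nat.card γ = Nat.card {g // Q g} + Nat.card {g // ¬ Q g} := by
  classical
  rw [← Nat.card_sum]
  exact Nat.card_congr (Equiv.sumCompl Q).symm

lemma card_le_subtype {γ : Type*} [Finite γ] {P Q : γ → Prop} (h : ∀ g, Q g → P g) :
    Nat.card {g // Q g} ≤ Nat.card {g // P g} :=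
  Nat.card_le_card_of_injective (fun x : {g // Q g} => (⟨x.1, h x.1 x.2⟩ : {g // P g}))
    (fun a b hab => Subtype.ext (by simpa using congrArg Subtype.val hab))

/-! ### Component counts of colored graphs -/

variable {V X : Type*} (G : SimpleGraph V) (c : V → X)

/-- Number of connected components of `G.induce s` containing a vertex with color in `B`. -/
def Mset (B : Set X) (s : Set V) : ℕ :=
  Nat.card {K : (G.induce s).ConnectedComponent //
    ∃ v : s, c v.1 ∈ B ∧ (G.induce s).connectedComponentMk v = K}

/-- Number of connected components of `G` containing a vertex with color in `B`. -/
def MsetInf (B : Set X) : ℕ :=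
  Nat.card {K : G.ConnectedComponent // ∃ v, c v ∈ B ∧ G.connectedComponentMk v = K}

/-- The set of colors in a component. -/
def cset {s : Set V} (K : (G.induce s).ConnectedComponent) : Set X :=
  {x | ∃ v, (G.induce s).connectedComponentMk v = K ∧ c v.1 = x}

/-- `componentColors` of the induced subgraph. -/
def ccount (s : Set V) (T : Set X) : ℕ :=
  Nat.card {K : (G.induce s).ConnectedComponent // cset G c K = T}

lemma ccount_eq_componentColors (s : Set V) :
    ccount G c s = componentColors (G.induce s) (fun v => c v.1) := rfl

lemma vBetti_eq_Mset (f : X → ℝ) (si : Bool) (i : ℝ) (sj : Bool) (j : ℝ) :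
    vBetti G (fun v => f (c v)) si i sj j =
      Mset G c {x | if si then f x < i else f x ≤ i}
        {v | c v ∈ {x | if sj then f x < j else f x ≤ j}} := rfl

lemma vBettiInf_eq_MsetInf (f : X → ℝ) (si : Bool) (i : ℝ) :
    vBettiInf G (fun v => f (c v)) si i =
      MsetInf G c {x | if si then f x < i else f x ≤ i} := rfl

lemma Mset_congr {B₁ B₂ : Set X} {s₁ s₂ : Set V} (hB : B₁ = B₂) (hs : s₁ = s₂) :
    Mset G c B₁ s₁ = Mset G c B₂ s₂ := by rw [hB, hs]

lemma meets_iff {s : Set V} (B : Set X) (K : (G.induce s).ConnectedComponent) :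
    (∃ v : s, c v.1 ∈ B ∧ (G.induce s).connectedComponentMk v = K) ↔
      (cset G c K ∩ B).Nonempty :=
  ⟨fun ⟨v, h1, h2⟩ => ⟨c v.1, ⟨v, h2, rfl⟩, h1⟩,
   fun ⟨x, ⟨v, h2, hx⟩, hB⟩ => ⟨v, hx ▸ hB, h2⟩⟩

lemma not_subset_iff {s : Set V} (U : Set X) (K : (G.induce s).ConnectedComponent) :
    ¬ (cset G c K ⊆ U) ↔
      (∃ v : s, c v.1 ∈ Uᶜ ∧ (G.induce s).connectedComponentMk v = K) := by
  rw [Set.not_subset, meets_iff]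
  constructor
  · rintro ⟨x, hx, hnx⟩; exact ⟨x, hx, hnx⟩
  · rintro ⟨x, hx, hnx⟩; exact ⟨x, hx, hnx⟩

variable [Fintype V] [Fintype X]

lemma Mset_eq_sum (B : Set X) (s : Set V) :
    Mset G c B s = ∑ T : Set X, if (T ∩ B).Nonempty then ccount G c s T else 0 := by
  rw [Mset, card_part_sum (cset G c)]
  refine Finset.sum_congr rfl fun T _ => ?_
  by_cases h : (T ∩ B).Nonempty
  · rw [if_pos h]
    exact Nat.card_congr (Equiv.subtypeEquivRight fun K =>
      ⟨fun hh => hh.1, fun hh => ⟨hh, (meets_iff G c B K).2 (by rw [hh]; exact h)⟩⟩)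
  · rw [if_neg h]
    have : IsEmpty {K : (G.induce s).ConnectedComponent //
        cset G c K = T ∧ ∃ v : s, c v.1 ∈ B ∧ (G.induce s).connectedComponentMk v = K} := by
      constructor
      rintro ⟨K, hT, hm⟩
      exact h (hT ▸ (meets_iff G c B K).1 hm)
    exact Nat.card_of_isEmpty

lemma sub_count (U : Set X) (s : Set V) :
    Nat.card {K : (G.induce s).ConnectedComponent // cset G c K ⊆ U} =
      ∑ T : Set X, if T ⊆ U then ccount G c s T else 0 := by
  rw [card_part_sum (cset G c)]
  refine Finset.sum_congr rfl fun T _ => ?_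
  by_cases h : T ⊆ U
  · rw [if_pos h]
    exact Nat.card_congr (Equiv.subtypeEquivRight fun K =>
      ⟨fun hh => hh.1, fun hh => ⟨hh, hh ▸ h⟩⟩)
  · rw [if_neg h]
    have : IsEmpty {K : (G.induce s).ConnectedComponent //
        cset G c K = T ∧ cset G c K ⊆ U} := by
      constructor; rintro ⟨K, hT, hm⟩; exact h (hT ▸ hm)
    exact Nat.card_of_isEmpty

lemma Mset_univ (s : Set V) :
    Mset G c Set.univ s = Nat.card (G.induce s).ConnectedComponent := by
  refine Nat.card_congr (Equiv.subtypeUnivEquiv ?_)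
  intro K
  obtain ⟨v, rfl⟩ := K.exists_rep
  exact ⟨v, trivial, rfl⟩

lemma Mset_total_split (U : Set X) (s : Set V) :
    Mset G c Set.univ s =
      Nat.card {K : (G.induce s).ConnectedComponent // cset G c K ⊆ U} +
        Mset G c Uᶜ s := by
  rw [Mset_univ, card_split_total (fun K : (G.induce s).ConnectedComponent => cset G c K ⊆ U)]
  congr 1
  exact Nat.card_congr (Equiv.subtypeEquivRight fun K => not_subset_iff G c U K)

lemma Mset_mono {B' B : Set X} (h : B' ⊆ B) (s : Set V) :
    Mset G c B' s ≤ Mset G c B s :=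
  card_le_subtype (fun K ⟨v, hv, hm⟩ => ⟨v, h hv, hm⟩)

lemma Mset_empty (s : Set V) : Mset G c ∅ s = 0 := by
  have : IsEmpty {K : (G.induce s).ConnectedComponent //
      ∃ v : s, c v.1 ∈ (∅ : Set X) ∧ (G.induce s).connectedComponentMk v = K} :=
    ⟨by rintro ⟨K, v, hv, _⟩; exact hv⟩
  exact Nat.card_of_isEmpty

/-- Number of components meeting `B` but not `B'`. -/
def Dcard (B B' : Set X) (s : Set V) : ℕ :=
  Nat.card {K : (G.induce s).ConnectedComponent //
    (∃ v : s, c v.1 ∈ B ∧ (G.induce s).connectedComponentMk v = K) ∧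
      ¬ (∃ v : s, c v.1 ∈ B' ∧ (G.induce s).connectedComponentMk v = K)}

lemma Mset_split {B' B : Set X} (h : B' ⊆ B) (s : Set V) :
    Mset G c B s = Mset G c B' s + Dcard G c B B' s :=
  card_split _ _ (fun K ⟨v, hv, hm⟩ => ⟨v, h hv, hm⟩)

/-- Inclusion homomorphism of induced subgraphs. -/
def inclHom {s t : Set V} (h : s ⊆ t) : G.induce s →g G.induce t where
  toFun := fun v => ⟨v.1, h v.2⟩
  map_rel' := fun hadj => hadj

lemma Dcard_antitone {B B' : Set X} {s₁ s₂ : Set V} (hs : s₁ ⊆ s₂)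
    (hB : ∀ v, c v ∈ B → v ∈ s₁) :
    Dcard G c B B' s₂ ≤ Dcard G c B B' s₁ := by
  classical
  have key : ∀ (u w : s₁),
      (G.induce s₁).connectedComponentMk u = (G.induce s₁).connectedComponentMk w →
      (G.induce s₂).connectedComponentMk ⟨u.1, hs u.2⟩ =
        (G.induce s₂).connectedComponentMk ⟨w.1, hs w.2⟩ := by
    intro u w h
    have := (SimpleGraph.ConnectedComponent.exact h).map (inclHom G hs)
    exact SimpleGraph.ConnectedComponent.sound this
  set F := fun K : {K : (G.induce s₂).ConnectedComponent //
      (∃ v : s₂, c v.1 ∈ B ∧ (G.induce s₂).connectedComponentMk v = K) ∧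
        ¬ (∃ v : s₂, c v.1 ∈ B' ∧ (G.induce s₂).connectedComponentMk v = K)} =>
    (⟨(G.induce s₁).connectedComponentMk ⟨(K.2.1.choose).1, hB _ K.2.1.choose_spec.1⟩,
      ⟨⟨(K.2.1.choose).1, hB _ K.2.1.choose_spec.1⟩, K.2.1.choose_spec.1, rfl⟩,
      by
        rintro ⟨u, hu, hmk⟩
        refine K.2.2 ⟨⟨u.1, hs u.2⟩, hu, ?_⟩
        have h2 := key u _ hmk
        rw [h2]
        have : (⟨(K.2.1.choose).1, hs (hB _ K.2.1.choose_spec.1)⟩ : s₂) = K.2.1.choose :=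
          Subtype.ext rfl
        rw [this, K.2.1.choose_spec.2]⟩ :
      {K : (G.induce s₁).ConnectedComponent //
        (∃ v : s₁, c v.1 ∈ B ∧ (G.induce s₁).connectedComponentMk v = K) ∧
          ¬ (∃ v : s₁, c v.1 ∈ B' ∧ (G.induce s₁).connectedComponentMk v = K)})
    with hF
  refine Nat.card_le_card_of_injective F ?_
  intro K₁ K₂ hK
  have h1 : (F K₁).1 = (F K₂).1 := congrArg Subtype.val hK
  simp only [hF] at h1
  have h2 := key _ _ h1
  have e1 : (⟨(K₁.2.1.choose).1, hs (hB _ K₁.2.1.choose_spec.1)⟩ : s₂) = K₁.2.1.choose :=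
    Subtype.ext rfl
  have e2 : (⟨(K₂.2.1.choose).1, hs (hB _ K₂.2.1.choose_spec.1)⟩ : s₂) = K₂.2.1.choose :=
    Subtype.ext rfl
  rw [e1, e2, K₁.2.1.choose_spec.2, K₂.2.1.choose_spec.2] at h2
  exact Subtype.ext h2

lemma Mset_univ_eq_MsetInf (B : Set X) :
    Mset G c B Set.univ = MsetInf G c B := by
  refine Nat.card_congr (Equiv.subtypeEquiv (G.induceUnivIso.connectedComponentEquiv) ?_)
  intro K
  constructor
  · rintro ⟨v, hv, rfl⟩
    exact ⟨v.1, hv, rfl⟩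
  · rintro ⟨v, hv, hmk⟩
    refine ⟨⟨v, trivial⟩, hv, G.induceUnivIso.connectedComponentEquiv.injective ?_⟩
    exact hmk

lemma Mset_inter (B A : Set X) :
    Mset G c B {v | c v ∈ A} = Mset G c (B ∩ A) {v | c v ∈ A} :=
  Nat.card_congr (Equiv.subtypeEquivRight fun K =>
    ⟨fun ⟨v, hv, hm⟩ => ⟨v, ⟨hv, v.2⟩, hm⟩, fun ⟨v, hv, hm⟩ => ⟨v, hv.1, hm⟩⟩)

end PH

end StmtAux

section StmtAux2
namespace PH
open Function

variable {V V' X : Type*} (G : SimpleGraph V) (G' : SimpleGraph V') (c : V → X) (c' : V' → X)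

variable [Fintype V] [Fintype V'] [Fintype X]

lemma MsetInf_mono {B' B : Set X} (h : B' ⊆ B) :
    MsetInf G c B' ≤ MsetInf G c B :=
  card_le_subtype (fun v ⟨w, hw, hm⟩ => ⟨w, h hw, hm⟩)

lemma Mset_eq_of_ccount {s : Set V} {s' : Set V'}
    (h : ccount G c s = ccount G' c' s') (B : Set X) :
    Mset G c B s = Mset G' c' B s' := by
  rw [Mset_eq_sum, Mset_eq_sum, h]

lemma subcard_eq {s : Set V} {s' : Set V'}
    (h : ∀ B, Mset G c B s = Mset G' c' B s') (U : Set X) :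
    Nat.card {K : (G.induce s).ConnectedComponent // cset G c K ⊆ U} =
      Nat.card {K : (G'.induce s').ConnectedComponent // cset G' c' K ⊆ U} := by
  have h1 := Mset_total_split G c U s
  have h2 := Mset_total_split G' c' U s'
  have h3 := h Set.univ
  have h4 := h Uᶜ
  omega

lemma ccount_eq_of_Mset {s : Set V} {s' : Set V'}
    (h : ∀ B, Mset G c B s = Mset G' c' B s') (T : Set X) :
    ccount G c s T = ccount G' c' s' T := by
  classical
  have hsub := subcard_eq G G' c c' h
  suffices H : ∀ n (T : Set X), T.ncard = n → ccount G c s T = ccount G' c' s' T from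
    H _ T rfl
  intro n
  induction n using Nat.strong_induction_on with
  | _ n IH =>
    intro T hT
    have h1 : ∑ T' ∈ Finset.univ.filter (· ⊆ T), ccount G c s T'
        = ∑ T' ∈ Finset.univ.filter (· ⊆ T), ccount G' c' s' T' := by
      rw [Finset.sum_filter, Finset.sum_filter, ← sub_count, ← sub_count, hsub T]
    have hmem : T ∈ Finset.univ.filter (· ⊆ T) := by simp
    rw [← Finset.add_sum_erase _ _ hmem, ← Finset.add_sum_erase _ _ hmem] at h1
    have h2 : ∑ T' ∈ (Finset.univ.filter (· ⊆ T)).erase T, ccount G c s T'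
        = ∑ T' ∈ (Finset.univ.filter (· ⊆ T)).erase T, ccount G' c' s' T' := by
      refine Finset.sum_congr rfl fun T' hT' => ?_
      obtain ⟨hne, hmem'⟩ := Finset.mem_erase.1 hT'
      have hss : T' ⊂ T := (by simpa using hmem' : T' ⊆ T).ssubset_of_ne hne
      have hlt : T'.ncard < n := hT ▸ Set.ncard_lt_ncard hss (Set.toFinite T)
      exact IH _ hlt T' rfl
    omega

lemma card_filter_color (f : X → ℝ) (d : ℝ) :
    Nat.card {v : V // f (c v) = d} =
      ∑ x : X, if f x = d then Nat.card {v : V // c v = x} else 0 := by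
  rw [card_part_sum c (fun v => f (c v) = d)]
  refine Finset.sum_congr rfl fun x _ => ?_
  by_cases h : f x = d
  · rw [if_pos h]
    exact Nat.card_congr (Equiv.subtypeEquivRight fun v =>
      ⟨fun hh => hh.1, fun hh => ⟨hh, by rw [hh, h]⟩⟩)
  · rw [if_neg h]
    have : IsEmpty {v : V // c v = x ∧ f (c v) = d} :=
      ⟨by rintro ⟨v, h1, h2⟩; exact h (h1 ▸ h2)⟩
    exact Nat.card_of_isEmpty

end PH
end StmtAux2

section StmtAux3
namespace PH
open Function

variable {V V' X : Type*} (G : SimpleGraph V) (G' : SimpleGraph V') (c : V → X) (c' : V' → X)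

lemma vBetti_eq_Mset_ff (f : X → ℝ) (i j : ℝ) :
    vBetti G (fun v => f (c v)) false i false j =
      Mset G c {x | f x ≤ i} {v | c v ∈ {x | f x ≤ j}} := rfl

lemma vBetti_eq_Mset_ft (f : X → ℝ) (i j : ℝ) :
    vBetti G (fun v => f (c v)) false i true j =
      Mset G c {x | f x ≤ i} {v | c v ∈ {x | f x < j}} := rfl

lemma vBetti_eq_Mset_tf (f : X → ℝ) (i j : ℝ) :
    vBetti G (fun v => f (c v)) true i false j =
      Mset G c {x | f x < i} {v | c v ∈ {x | f x ≤ j}} := rfl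

lemma vBetti_eq_Mset_tt (f : X → ℝ) (i j : ℝ) :
    vBetti G (fun v => f (c v)) true i true j =
      Mset G c {x | f x < i} {v | c v ∈ {x | f x < j}} := rfl

lemma vBettiInf_eq_MsetInf_f (f : X → ℝ) (i : ℝ) :
    vBettiInf G (fun v => f (c v)) false i = MsetInf G c {x | f x ≤ i} := rfl

lemma vBettiInf_eq_MsetInf_t (f : X → ℝ) (i : ℝ) :
    vBettiInf G (fun v => f (c v)) true i = MsetInf G c {x | f x < i} := rfl

variable [Fintype V] [Fintype V'] [Fintype X]

lemma diagrams_eq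
    (hcc : ∀ Q : Set X,
      componentColors (G.induce {v | c v ∉ Q}) (fun v => c v.1) =
        componentColors (G'.induce {v | c' v ∉ Q}) (fun v => c' v.1))
    (hcolors : ∀ x : X, Nat.card {v : V // c v = x} = Nat.card {v' : V' // c' v' = x})
    (f : X → ℝ) :
    vDiagram G (fun v => f (c v)) = vDiagram G' (fun v => f (c' v)) := by
  have hMA : ∀ (B A : Set X),
      Mset G c B {v | c v ∈ A} = Mset G' c' B {v' | c' v' ∈ A} := by
    intro B A
    have h1 : {v : V | c v ∈ A} = {v | c v ∉ Aᶜ} := by ext v; simp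
    have h2 : {v' : V' | c' v' ∈ A} = {v' | c' v' ∉ Aᶜ} := by ext v; simp
    rw [Mset_congr G c rfl h1, Mset_congr G' c' rfl h2]
    exact Mset_eq_of_ccount G G' c c' (hcc Aᶜ) B
  have hMinf : ∀ B : Set X, MsetInf G c B = MsetInf G' c' B := by
    intro B
    have h1 : {v : V | c v ∈ (Set.univ : Set X)} = Set.univ := by ext; simp
    have h2 : {v' : V' | c' v' ∈ (Set.univ : Set X)} = Set.univ := by ext; simp
    rw [← Mset_univ_eq_MsetInf, ← Mset_univ_eq_MsetInf, ← Mset_congr G c rfl h1,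
      ← Mset_congr G' c' rfl h2]
    exact hMA B Set.univ
  have hcnt : ∀ d : ℝ, Nat.card {v : V // f (c v) = d} =
      Nat.card {v' : V' // f (c' v') = d} := by
    intro d
    rw [card_filter_color c f d, card_filter_color c' f d]
    refine Finset.sum_congr rfl fun x _ => ?_
    rw [hcolors x]
  funext p
  obtain ⟨b, dd⟩ := p
  cases dd using WithTop.recTopCoe with
  | top =>
    show vBettiInf G _ false b - vBettiInf G _ true b
        = vBettiInf G' _ false b - vBettiInf G' _ true b
    rw [vBettiInf_eq_MsetInf G c, vBettiInf_eq_MsetInf G c,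
      vBettiInf_eq_MsetInf G' c', vBettiInf_eq_MsetInf G' c', hMinf, hMinf]
  | coe d =>
    rw [show vDiagram G (fun v => f (c v)) (b, (d : WithTop ℝ)) =
        (if b = d then
          Nat.card {v : V // f (c v) = d} -
            (vBetti G (fun v => f (c v)) false d false d
              - vBetti G (fun v => f (c v)) true d false d)
        else if b < d then
          ((vBetti G (fun v => f (c v)) false b true d : ℤ)
            - (vBetti G (fun v => f (c v)) false b false d : ℤ)
            - (vBetti G (fun v => f (c v)) true b true d : ℤ)
            + (vBetti G (fun v => f (c v)) true b false d : ℤ)).toNat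
        else 0) from rfl,
      show vDiagram G' (fun v => f (c' v)) (b, (d : WithTop ℝ)) =
        (if b = d then
          Nat.card {v' : V' // f (c' v') = d} -
            (vBetti G' (fun v => f (c' v)) false d false d
              - vBetti G' (fun v => f (c' v)) true d false d)
        else if b < d then
          ((vBetti G' (fun v => f (c' v)) false b true d : ℤ)
            - (vBetti G' (fun v => f (c' v)) false b false d : ℤ)
            - (vBetti G' (fun v => f (c' v)) true b true d : ℤ)
            + (vBetti G' (fun v => f (c' v)) true b false d : ℤ)).toNat
        else 0) from rfl]
    split_ifs with h1 h2
    · rw [hcnt d, vBetti_eq_Mset G c, vBetti_eq_Mset G c,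
        vBetti_eq_Mset G' c', vBetti_eq_Mset G' c', hMA, hMA]
    · rw [vBetti_eq_Mset G c, vBetti_eq_Mset G c, vBetti_eq_Mset G c, vBetti_eq_Mset G c,
        vBetti_eq_Mset G' c', vBetti_eq_Mset G' c', vBetti_eq_Mset G' c',
        vBetti_eq_Mset G' c', hMA, hMA, hMA, hMA]
    · rfl

end PH
end StmtAux3

section StmtAux4
namespace PH
open Function

variable {V V' X : Type*} (G : SimpleGraph V) (G' : SimpleGraph V') (c : V → X) (c' : V' → X)

lemma vDiagram_coe_eq (G : SimpleGraph V) (φ : V → ℝ) (b d : ℝ) :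
    vDiagram G φ (b, (d : WithTop ℝ)) =
      if b = d then
        Nat.card {v : V // φ v = d} -
          (vBetti G φ false d false d - vBetti G φ true d false d)
      else if b < d then
        ((vBetti G φ false b true d : ℤ) - (vBetti G φ false b false d : ℤ)
          - (vBetti G φ true b true d : ℤ) + (vBetti G φ true b false d : ℤ)).toNat
      else 0 := rfl

lemma vDiagram_top_eq (G : SimpleGraph V) (φ : V → ℝ) (b : ℝ) :
    vDiagram G φ (b, ⊤) = vBettiInf G φ false b - vBettiInf G φ true b := rfl

variable [Fintype V] [Fintype V'] [Fintype X]

lemma exists_f_of_Mset_ne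
    (hex : ∃ B A : Set X,
      Mset G c B {v | c v ∈ A} ≠ Mset G' c' B {v' | c' v' ∈ A}) :
    ∃ f : X → ℝ, Function.Injective f ∧
      vDiagram G (fun v => f (c v)) ≠ vDiagram G' (fun v => f (c' v)) := by
  classical
  obtain ⟨B₀, A₀, hne₀⟩ := hex
  rw [Mset_inter G c, Mset_inter G' c'] at hne₀
  set F : Finset (Set X × Set X) := Finset.univ.filter
    (fun p : Set X × Set X => p.1 ⊆ p.2 ∧
      Mset G c p.1 {v | c v ∈ p.2} ≠ Mset G' c' p.1 {v' | c' v' ∈ p.2}) with hFdef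
  have hFne : F.Nonempty :=
    ⟨(B₀ ∩ A₀, A₀), Finset.mem_filter.2
      ⟨Finset.mem_univ _, Set.inter_subset_right, hne₀⟩⟩
  obtain ⟨p₀, hp₀, hmax⟩ := F.exists_max_image (fun p => p.2.ncard) hFne
  obtain ⟨⟨B, A⟩, hp₁, hmin⟩ :=
    (F.filter (fun p => p.2.ncard = p₀.2.ncard)).exists_min_image
      (fun p => p.1.ncard) ⟨p₀, Finset.mem_filter.2 ⟨hp₀, rfl⟩⟩
  obtain ⟨hp₁F, hp₁card⟩ := Finset.mem_filter.1 hp₁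
  obtain ⟨-, hBA0, hPne0⟩ := Finset.mem_filter.1 hp₁F
  have hBA : B ⊆ A := hBA0
  have hPne : Mset G c B {v | c v ∈ A} ≠ Mset G' c' B {v' | c' v' ∈ A} := hPne0
  have hpcard : A.ncard = p₀.2.ncard := hp₁card
  have hAmax : ∀ B' A' : Set X, B' ⊆ A' → A.ncard < A'.ncard →
      Mset G c B' {v | c v ∈ A'} = Mset G' c' B' {v' | c' v' ∈ A'} := by
    intro B' A' hsub hlt
    by_contra hne'
    have hmem : (B', A') ∈ F := Finset.mem_filter.2 ⟨Finset.mem_univ _, hsub, hne'⟩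
    have h1 := hmax _ hmem
    simp only at h1
    omega
  have hBmin : ∀ B' : Set X, B' ⊆ A → B'.ncard < B.ncard →
      Mset G c B' {v | c v ∈ A} = Mset G' c' B' {v' | c' v' ∈ A} := by
    intro B' hsub hlt
    by_contra hne'
    have hmemF : (B', A) ∈ F := Finset.mem_filter.2 ⟨Finset.mem_univ _, hsub, hne'⟩
    have hmem1 : (B', A) ∈ F.filter (fun p => p.2.ncard = p₀.2.ncard) :=
      Finset.mem_filter.2 ⟨hmemF, hpcard⟩
    have h1 := hmin _ hmem1
    simp only at h1
    omega
  have hBne : B.Nonempty := by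
    rw [Set.nonempty_iff_ne_empty]
    intro hBe
    exact hPne (by rw [hBe, Mset_empty, Mset_empty])
  obtain ⟨x, hx⟩ := hBne
  have hBxA : B \ {x} ⊆ A := Set.diff_subset.trans hBA
  have hBxcard : (B \ {x}).ncard < B.ncard :=
    Set.ncard_lt_ncard (Set.sdiff_singleton_ssubset.2 hx) (Set.toFinite B)
  have hE3 := hBmin (B \ {x}) hBxA hBxcard
  set n := Fintype.card X with hn
  set g : X → ℕ := fun z => ((Fintype.equivFin X) z : ℕ) with hg
  have hglt : ∀ z, g z < n := fun z => ((Fintype.equivFin X) z).2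
  have hginj : Injective g := fun a b h => (Fintype.equivFin X).injective (Fin.ext h)
  by_cases hyex : ∃ y, y ∉ A
  · -- Case 1 : some color is outside `A`
    obtain ⟨y, hy⟩ := hyex
    have hAy : A.ncard < (A ∪ {y}).ncard := by
      rw [Set.union_singleton]
      exact Set.ncard_lt_ncard (Set.ssubset_insert hy) (Set.toFinite _)
    have hE2 := hAmax B (A ∪ {y}) (hBA.trans Set.subset_union_left) hAy
    have hE4 := hAmax (B \ {x}) (A ∪ {y}) (hBxA.trans Set.subset_union_left) hAy
    set fn : X → ℕ := fun z =>
      if z ∈ B \ {x} then g z else if z = x then n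
      else if z ∈ A then n + 1 + g z else if z = y then 2*n+2 else 2*n+3 + g z with hfn
    have hfninj : Injective fn := by
      intro z w h
      have hz := hglt z; have hw := hglt w
      simp only [hfn] at h
      split_ifs at h <;>
        first
          | (exact hginj (by omega))
          | omega
          | simp_all
    set f : X → ℝ := fun z => ((fn z : ℕ) : ℝ) with hf
    have hfinj : Injective f := fun a b h => hfninj (Nat.cast_injective h)
    have l1 : {z : X | f z ≤ ((n : ℕ) : ℝ)} = B := by
      ext z
      simp only [hf, Set.mem_setOf_eq, Nat.cast_le, hfn]
      have hz := hglt z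
      split_ifs with h1 h2 h3 h4
      · exact iff_of_true (hglt z).le h1.1
      · exact iff_of_true le_rfl (h2 ▸ hx)
      · exact iff_of_false (by omega) (fun hzB => h1 ⟨hzB, h2⟩)
      · exact iff_of_false (by omega) (fun hzB => h1 ⟨hzB, h2⟩)
      · exact iff_of_false (by omega) (fun hzB => h1 ⟨hzB, h2⟩)
    have l2 : {z : X | f z < ((n : ℕ) : ℝ)} = B \ {x} := by
      ext z
      simp only [hf, Set.mem_setOf_eq, Nat.cast_lt, hfn]
      have hz := hglt z
      split_ifs with h1 h2 h3 h4
      · exact iff_of_true (hglt z) h1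
      · exact iff_of_false (by omega) h1
      · exact iff_of_false (by omega) h1
      · exact iff_of_false (by omega) h1
      · exact iff_of_false (by omega) h1
    have l3 : {z : X | f z < ((2*n+2 : ℕ) : ℝ)} = A := by
      ext z
      simp only [hf, Set.mem_setOf_eq, Nat.cast_lt, hfn]
      have hz := hglt z
      split_ifs with h1 h2 h3 h4
      · exact iff_of_true (by omega) (hBA h1.1)
      · exact iff_of_true (by omega) (hBA (h2 ▸ hx))
      · exact iff_of_true (by omega) h3
      · exact iff_of_false (by omega) h3
      · exact iff_of_false (by omega) h3
    have l4 : {z : X | f z ≤ ((2*n+2 : ℕ) : ℝ)} = A ∪ {y} := by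
      ext z
      simp only [hf, Set.mem_setOf_eq, Nat.cast_le, hfn]
      have hz := hglt z
      split_ifs with h1 h2 h3 h4
      · exact iff_of_true (by omega) (Set.mem_union_left _ (hBA h1.1))
      · exact iff_of_true (by omega) (Set.mem_union_left _ (hBA (h2 ▸ hx)))
      · exact iff_of_true (by omega) (Set.mem_union_left _ h3)
      · exact iff_of_true (by omega) (Set.mem_union_right _ h4)
      · refine iff_of_false (by omega) ?_
        rintro (hzA | hzy)
        · exact h3 hzA
        · exact h4 hzy
    refine ⟨f, hfinj, fun hEq => ?_⟩
    have hpt := congrFun hEq (((n : ℕ) : ℝ), (((2*n+2 : ℕ) : ℝ) : WithTop ℝ))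
    have hbd : ((n : ℕ) : ℝ) ≠ ((2*n+2 : ℕ) : ℝ) := by
      intro h
      have := Nat.cast_injective h
      omega
    have hblt : ((n : ℕ) : ℝ) < ((2*n+2 : ℕ) : ℝ) := by
      have : n < 2*n+2 := by omega
      exact_mod_cast this
    rw [vDiagram_coe_eq, vDiagram_coe_eq, if_neg hbd, if_neg hbd, if_pos hblt, if_pos hblt,
      vBetti_eq_Mset_ft G c, vBetti_eq_Mset_ff G c, vBetti_eq_Mset_tt G c,
      vBetti_eq_Mset_tf G c, vBetti_eq_Mset_ft G' c', vBetti_eq_Mset_ff G' c',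
      vBetti_eq_Mset_tt G' c', vBetti_eq_Mset_tf G' c', l1, l2, l3, l4] at hpt
    have hs1 : Mset G c B {v | c v ∈ A} =
        Mset G c (B \ {x}) {v | c v ∈ A} + Dcard G c B (B \ {x}) {v | c v ∈ A} :=
      Mset_split G c Set.diff_subset _
    have hs2 : Mset G c B {v | c v ∈ A ∪ {y}} =
        Mset G c (B \ {x}) {v | c v ∈ A ∪ {y}} + Dcard G c B (B \ {x}) {v | c v ∈ A ∪ {y}} :=
      Mset_split G c Set.diff_subset _
    have hs1' : Mset G' c' B {v' | c' v' ∈ A} =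
        Mset G' c' (B \ {x}) {v' | c' v' ∈ A} + Dcard G' c' B (B \ {x}) {v' | c' v' ∈ A} :=
      Mset_split G' c' Set.diff_subset _
    have hs2' : Mset G' c' B {v' | c' v' ∈ A ∪ {y}} =
        Mset G' c' (B \ {x}) {v' | c' v' ∈ A ∪ {y}} +
          Dcard G' c' B (B \ {x}) {v' | c' v' ∈ A ∪ {y}} :=
      Mset_split G' c' Set.diff_subset _
    have hDle : Dcard G c B (B \ {x}) {v | c v ∈ A ∪ {y}} ≤
        Dcard G c B (B \ {x}) {v | c v ∈ A} :=
      Dcard_antitone G c (fun v hv => Set.mem_union_left _ hv) (fun v hv => hBA hv)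
    have hDle' : Dcard G' c' B (B \ {x}) {v' | c' v' ∈ A ∪ {y}} ≤
        Dcard G' c' B (B \ {x}) {v' | c' v' ∈ A} :=
      Dcard_antitone G' c' (fun v hv => Set.mem_union_left _ hv) (fun v hv => hBA hv)
    exact hPne (by omega)
  · -- Case 2 : `A` is everything
    have hAuniv : A = Set.univ := Set.eq_univ_of_forall (by push_neg at hyex; exact hyex)
    have hsuV : {v : V | c v ∈ A} = Set.univ := by rw [hAuniv]; ext; simp
    have hsuV' : {v' : V' | c' v' ∈ A} = Set.univ := by rw [hAuniv]; ext; simp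
    rw [Mset_congr G c rfl hsuV, Mset_congr G' c' rfl hsuV',
      Mset_univ_eq_MsetInf, Mset_univ_eq_MsetInf] at hPne
    rw [Mset_congr G c rfl hsuV, Mset_congr G' c' rfl hsuV',
      Mset_univ_eq_MsetInf, Mset_univ_eq_MsetInf] at hE3
    set fn : X → ℕ := fun z =>
      if z ∈ B \ {x} then g z else if z = x then n else n + 1 + g z with hfn
    have hfninj : Injective fn := by
      intro z w h
      have hz := hglt z; have hw := hglt w
      simp only [hfn] at h
      split_ifs at h <;>
        first
          | (exact hginj (by omega))
          | omega
          | simp_all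
    set f : X → ℝ := fun z => ((fn z : ℕ) : ℝ) with hf
    have hfinj : Injective f := fun a b h => hfninj (Nat.cast_injective h)
    have l1 : {z : X | f z ≤ ((n : ℕ) : ℝ)} = B := by
      ext z
      simp only [hf, Set.mem_setOf_eq, Nat.cast_le, hfn]
      have hz := hglt z
      split_ifs with h1 h2
      · exact iff_of_true (hglt z).le h1.1
      · exact iff_of_true le_rfl (h2 ▸ hx)
      · exact iff_of_false (by omega) (fun hzB => h1 ⟨hzB, h2⟩)
    have l2 : {z : X | f z < ((n : ℕ) : ℝ)} = B \ {x} := by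
      ext z
      simp only [hf, Set.mem_setOf_eq, Nat.cast_lt, hfn]
      have hz := hglt z
      split_ifs with h1 h2
      · exact iff_of_true (hglt z) h1
      · exact iff_of_false (by omega) h1
      · exact iff_of_false (by omega) h1
    refine ⟨f, hfinj, fun hEq => ?_⟩
    have hpt := congrFun hEq (((n : ℕ) : ℝ), (⊤ : WithTop ℝ))
    rw [vDiagram_top_eq, vDiagram_top_eq, vBettiInf_eq_MsetInf_f G c,
      vBettiInf_eq_MsetInf_t G c, vBettiInf_eq_MsetInf_f G' c',
      vBettiInf_eq_MsetInf_t G' c', l1, l2] at hpt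
    have m1 : MsetInf G c (B \ {x}) ≤ MsetInf G c B := MsetInf_mono G c Set.diff_subset
    have m2 : MsetInf G' c' (B \ {x}) ≤ MsetInf G' c' B := MsetInf_mono G' c' Set.diff_subset
    exact hPne (by omega)

end PH
end StmtAux4


/-- The expressive power of vertex-color filtrations: for graphs with
identical multisets of vertex colors, some injective color filter yields different 0-dim
persistence diagrams iff there is a color-separating set for the two graphs. -/
theorem stmt6 {V V' X : Type} [Fintype V] [Fintype V'] [Fintype X]
    (G : SimpleGraph V) (G' : SimpleGraph V') (c : V → X) (c' : V' → X)
    (hcolors : ∀ x : X, Nat.card {v : V // c v = x} = Nat.card {v' : V' // c' v' = x}) :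
    (∃ f : X → ℝ, Function.Injective f ∧
      PH.vDiagram G (fun v => f (c v)) ≠ PH.vDiagram G' (fun v => f (c' v))) ↔
    ∃ Q : Set X, PH.ColorSeparating G G' c c' Q := by
  constructor
  · rintro ⟨f, hf, hne⟩
    by_contra hQ
    push_neg at hQ
    refine hne (PH.diagrams_eq G G' c c' (fun Q => not_ne_iff.1 (hQ Q)) hcolors f)
  · rintro ⟨Q, hQ⟩
    apply PH.exists_f_of_Mset_ne G G' c c'
    by_contra hall
    push_neg at hall
    refine hQ (funext fun T => ?_)
    refine PH.ccount_eq_of_Mset G G' c c' (fun B => ?_) T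
    have h1 : {v : V | c v ∈ Qᶜ} = {v | c v ∉ Q} := by ext v; simp
    have h2 : {v' : V' | c' v' ∈ Qᶜ} = {v' | c' v' ∉ Q} := by ext v; simp
    rw [← PH.Mset_congr G c rfl h1, ← PH.Mset_congr G' c' rfl h2]
    exact hall B Qᶜ

end
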